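/- arXiv:1905.10495 — 6 statements merged into one kernel-verified Lean document; each statement's English description precedes it below -/
import Mathlib

section
/- Let R be a p-adically complete δ-ring. If r ∈ R is idempotent (r² = r), then δ(r) = 0, and consequently δ(r·r') = r·δ(r') for all r' ∈ R. -/
/-- A δ-structure on a commutative ring `R`, for the prime `p`. -/
def IsDeltaStructure (p : ℕ) {R : Type*} [CommRing R] (δ : R → R) : Prop :=
  δ 1 = 0 ∧
  (∀ x y : R, δ (x + y) = δ x + δ y -
      ∑ i ∈ Finset.Ioo 0 p, ((p.choose i / p : ℕ) : R) * x ^ i * y ^ (p - i)) ∧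
  (∀ x y : R, δ (x * y) = x ^ p * δ y + δ x * y ^ p + (p : R) * δ x * δ y)

theorem delta_of_idempotent_eq_zero (p : ℕ) (hp : p.Prime) (R : Type*) [CommRing R]
    [IsAdicComplete (Ideal.span {(p : R)}) R]
    (δ : R → R) (hδ : IsDeltaStructure p δ)
    (r : R) (hr : r * r = r) :
    δ r = 0 ∧ ∀ r' : R, δ (r * r') = r * δ r' := by
  obtain ⟨h1, hadd, hmul⟩ := hδ
  have hpow : ∀ n : ℕ, r ^ (n + 1) = r := by
    intro n
    induction n with
    | zero => simp
    | succ n ih => rw [pow_succ, ih, hr]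
  have hrp : r ^ p = r := by
    obtain ⟨m, hm⟩ := Nat.exists_eq_add_of_le hp.one_le
    rw [hm, add_comm, hpow]
  have hmr := hmul r r
  rw [hr, hrp] at hmr
  have key : δ r * (1 - 2 * r - (p : R) * δ r) = 0 := by linear_combination hmr
  have hu : IsUnit (1 - 2 * r - (p : R) * δ r) := by
    have hj : (Ideal.span {(p : R)}) ≤ (⊥ : Ideal R).jacobson :=
      IsAdicComplete.le_jacobson_bot _
    have hx : (-((p : R) * δ r * (1 - 2 * r))) ∈ Ideal.span {(p : R)} := by
      rw [Ideal.mem_span_singleton]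
      exact ⟨-(δ r * (1 - 2 * r)), by ring⟩
    have hu1 : IsUnit ((-((p : R) * δ r * (1 - 2 * r))) * 1 + 1) :=
      Ideal.mem_jacobson_bot.mp (hj hx) 1
    have hu2 : IsUnit (1 - 2 * r) := IsUnit.of_mul_eq_one (1 - 2 * r) (by linear_combination (4 : R) * hr)
    have heq : (1 - 2 * r) * ((-((p : R) * δ r * (1 - 2 * r))) * 1 + 1) =
        1 - 2 * r - (p : R) * δ r := by linear_combination (-4 * (p : R) * δ r) * hr
    rw [← heq]
    exact hu2.mul hu1
  have hδr : δ r = 0 := by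
    rcases hu with ⟨v, hv⟩
    have := congrArg (· * (↑v⁻¹ : R)) key
    simp only [zero_mul] at this
    rw [← hv, mul_assoc, Units.mul_inv, mul_one] at this
    exact this
  refine ⟨hδr, fun r' => ?_⟩
  rw [hmul r r', hδr, hrp]
  ring
end

section
/- Let A be a p-adically complete ring with p topologically nilpotent, and let θ: A[T]/(T^{p^n}−1) → A[S]/(S^{p^m}−1) be a Hopf algebra homomorphism, so θ(T) = ∑_{i=1}^{p^n} a_i S^i where the a_i ∈ A are orthogonal idempotents summing appropriately. Then for the δ-structures with δ(T) = 0 and δ(S) = 0, θ satisfies δ(θ(T)) = 0; that is, θ is a δ-homomorphism. -/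
lemma eq_zero_of_self_eq_pmul {R : Type*} [CommRing R] {p : ℕ}
    [IsAdicComplete (Ideal.span {(p : R)}) R] {x c : R}
    (hx : x = (p : R) * c * x) : x = 0 := by
  have key : ∀ k : ℕ, x = ((p : R) * c) ^ k * x := by
    intro k
    induction k with
    | zero => simp
    | succ k ih =>
      calc x = ((p : R) * c) ^ k * x := ih
        _ = ((p : R) * c) ^ k * ((p : R) * c * x) := by rw [← hx]
        _ = ((p : R) * c) ^ (k + 1) * x := by ring
  have haus : IsHausdorff (Ideal.span {(p : R)}) R := inferInstance
  apply haus.haus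
  intro k
  rw [SModEq.zero, Ideal.smul_eq_mul, Ideal.mul_top, Ideal.span_singleton_pow]
  exact Ideal.mem_span_singleton.mpr ⟨c ^ k * x, by nth_rewrite 1 [key k]; ring⟩

lemma delta_zero_eq_zero {R : Type*} [CommRing R] {p : ℕ} (_hp : 1 ≤ p)
    {δ : R → R} (h : IsDeltaStructure p δ) : δ 0 = 0 := by
  have hadd := h.2.1 0 0
  have hz : ∀ i ∈ Finset.Ioo 0 p,
      ((p.choose i / p : ℕ) : R) * (0 : R) ^ i * (0 : R) ^ (p - i) = 0 := by
    intro i hi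
    rcases Finset.mem_Ioo.mp hi with ⟨h1, _⟩
    rw [zero_pow (by omega), mul_zero, zero_mul]
  rw [Finset.sum_congr rfl hz, Finset.sum_const, smul_zero, add_zero, sub_zero] at hadd
  linear_combination -hadd

lemma delta_idem_eq_zero {R : Type*} [CommRing R] {p : ℕ} (hp : 1 ≤ p)
    [IsAdicComplete (Ideal.span {(p : R)}) R]
    {δ : R → R} (h : IsDeltaStructure p δ) {e : R} (he : e * e = e) :
    δ e = 0 := by
  have hepow : ∀ k : ℕ, e ^ (k + 1) = e := by
    intro k
    induction k with
    | zero => simp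
    | succ k ih => rw [pow_succ, ih, he]
  have hep : e ^ p = e := by
    obtain ⟨k, rfl⟩ : ∃ k, p = k + 1 := ⟨p - 1, by omega⟩
    exact hepow k
  have hmul := h.2.2 e e
  rw [he, hep] at hmul
  set d := δ e with hd
  have hed : e * d = 0 := by
    apply eq_zero_of_self_eq_pmul (p := p) (c := -d)
    linear_combination (-e) * hmul + (-2 * d) * he
  have hstep : d = (p : R) * d * d := by
    linear_combination hmul + 2 * hed
  exact eq_zero_of_self_eq_pmul hstep

lemma delta_pow_eq_zero {R : Type*} [CommRing R] {p : ℕ}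
    {δ : R → R} (h : IsDeltaStructure p δ) {S : R} (hS : δ S = 0) (i : ℕ) :
    δ (S ^ i) = 0 := by
  induction i with
  | zero => simpa using h.1
  | succ k ih =>
    rw [pow_succ, h.2.2, ih, hS]
    ring

lemma delta_sum_eq_zero {R : Type*} [CommRing R] {p : ℕ} (hp : 1 ≤ p)
    {δ : R → R} (h : IsDeltaStructure p δ) {ι : Type*} (s : Finset ι) (f : ι → R)
    (horth : ∀ i ∈ s, ∀ j ∈ s, i ≠ j → f i * f j = 0)
    (hz : ∀ i ∈ s, δ (f i) = 0) :
    δ (∑ i ∈ s, f i) = 0 := by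
  induction s using Finset.cons_induction with
  | empty => simpa using delta_zero_eq_zero hp h
  | cons a s ha ih =>
    rw [Finset.sum_cons, h.2.1, hz a (Finset.mem_cons_self a s),
      ih (fun i hi j hj hij => horth i (Finset.mem_cons_of_mem hi) j (Finset.mem_cons_of_mem hj) hij)
        (fun i hi => hz i (Finset.mem_cons_of_mem hi))]
    have hfa : f a * ∑ j ∈ s, f j = 0 := by
      rw [Finset.mul_sum]
      apply Finset.sum_eq_zero
      intro j hj
      exact horth a (Finset.mem_cons_self a s) j (Finset.mem_cons_of_mem hj)
        (fun hh => ha (hh ▸ hj))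
    have hterms : ∀ i ∈ Finset.Ioo 0 p,
        ((p.choose i / p : ℕ) : R) * (f a) ^ i * (∑ j ∈ s, f j) ^ (p - i) = 0 := by
      intro i hi
      rcases Finset.mem_Ioo.mp hi with ⟨h1, h2⟩
      obtain ⟨i', rfl⟩ : ∃ i', i = i' + 1 := ⟨i - 1, by omega⟩
      obtain ⟨q, hq⟩ : ∃ q, p - (i' + 1) = q + 1 := ⟨p - i' - 2, by omega⟩
      rw [hq]
      calc ((p.choose (i' + 1) / p : ℕ) : R) * (f a) ^ (i' + 1) * (∑ j ∈ s, f j) ^ (q + 1)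
          = ((p.choose (i' + 1) / p : ℕ) : R) * (f a) ^ i' * (∑ j ∈ s, f j) ^ q *
            (f a * ∑ j ∈ s, f j) := by ring
        _ = 0 := by rw [hfa, mul_zero]
    rw [Finset.sum_congr rfl hterms, Finset.sum_const, smul_zero]
    ring

/-- The Hopf algebra `A[T]/(T^{p^n} − 1)` of the group scheme `μ_{p^n}` over `A`. -/
abbrev MuHopf (p n : ℕ) (A : Type*) [CommRing A] : Type _ :=
  AdjoinRoot ((Polynomial.X : Polynomial A) ^ p ^ n - 1)

/-- Any Hopf algebra homomorphism `θ : A[T]/(T^{p^n}−1) → A[S]/(S^{p^m}−1)`, necessarily sending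
`T` to `∑ aᵢ Sⁱ` with `(aᵢ)` orthogonal idempotents, is a δ-homomorphism: `δ(θ(T)) = 0`. -/
theorem delta_of_hopf_hom_root_eq_zero (p : ℕ) (hp : p.Prime) (n m : ℕ)
    (A : Type*) [CommRing A] [IsAdicComplete (Ideal.span {(p : A)}) A]
    [IsAdicComplete (Ideal.span {(p : MuHopf p m A)}) (MuHopf p m A)]
    (θ : MuHopf p n A →ₐ[A] MuHopf p m A)
    (δ' : MuHopf p m A → MuHopf p m A) (hδ' : IsDeltaStructure p δ')
    (hroot : δ' (AdjoinRoot.root _) = 0)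
    (a : ℕ → A)
    (hidem : ∀ i, a i * a i = a i)
    (horth : ∀ i j, i ≠ j → a i * a j = 0)
    (hθ : θ (AdjoinRoot.root _) =
      ∑ i ∈ Finset.Icc 1 (p ^ n), algebraMap A (MuHopf p m A) (a i) * AdjoinRoot.root _ ^ i) :
    δ' (θ (AdjoinRoot.root _)) = 0 := by
  have hp1 : 1 ≤ p := hp.one_lt.le.trans' (by omega)
  rw [hθ]
  apply delta_sum_eq_zero hp1 hδ'
  · intro i _ j _ hij
    have : algebraMap A (MuHopf p m A) (a i) * algebraMap A (MuHopf p m A) (a j) = 0 := by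
      rw [← map_mul, horth i j hij, map_zero]
    calc (algebraMap A (MuHopf p m A) (a i) * AdjoinRoot.root _ ^ i) *
        (algebraMap A (MuHopf p m A) (a j) * AdjoinRoot.root _ ^ j)
        = (algebraMap A (MuHopf p m A) (a i) * algebraMap A (MuHopf p m A) (a j)) *
          (AdjoinRoot.root _ ^ i * AdjoinRoot.root _ ^ j) := by ring
      _ = 0 := by rw [this, zero_mul]
  · intro i _
    have hide : algebraMap A (MuHopf p m A) (a i) * algebraMap A (MuHopf p m A) (a i) =
        algebraMap A (MuHopf p m A) (a i) := by rw [← map_mul, hidem i]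
    have h1 : δ' (algebraMap A (MuHopf p m A) (a i)) = 0 :=
      delta_idem_eq_zero hp1 hδ' hide
    have h2 : δ' (AdjoinRoot.root _ ^ i) = 0 := delta_pow_eq_zero hδ' hroot i
    rw [hδ'.2.2, h1, h2]
    ring
end

section
/- For any commutative ring R in which p is nilpotent, p is nilpotent in the truncated Witt vector ring W_n(R) for every n ≥ 0. -/
/-!
If `x ∈ W(R)` has its first `m` coefficients zero, then `x = V^m y`, and for a natural number `c`
we get `x * c = V^m (y * F^m c) = V^m (y * c)` because Frobenius fixes `c`. The coefficient of index
`m` of this product is `y₀ * c`, so it vanishes as soon as `c = 0` in `R`. By induction `c ^ m`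
lies in the kernel of `W(R) → W_m(R)`, and `c = p ^ k` makes `p` nilpotent in `W_m(R)`.
-/

open Function

namespace WittVector

variable {p : ℕ} [Fact p.Prime] {R : Type*} [CommRing R]

theorem coeff_zero_natCast (c : ℕ) : (c : WittVector p R).coeff 0 = c :=
  map_natCast constantCoeff c

theorem mul_natCast_mem_ker_truncate_succ {m c : ℕ} (hc : (c : R) = 0) {x : WittVector p R}
    (hx : x ∈ RingHom.ker (truncate m)) :
    x * (c : WittVector p R) ∈ RingHom.ker (truncate (m + 1)) := by
  rw [mem_ker_truncate] at hx ⊢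
  set z : WittVector p R := x.shift m * c
  have hxc : x * (c : WittVector p R) = verschiebung^[m] z := by
    conv_lhs => rw [eq_iterate_verschiebung hx, iterate_verschiebung_mul_left,
      iterate_fixed (map_natCast frobenius c)]
  have hz : z.coeff 0 = 0 := by rw [mul_coeff_zero, coeff_zero_natCast, hc, mul_zero]
  intro i hi
  rw [hxc]
  rcases (Nat.lt_succ_iff.mp hi).lt_or_eq with hlt | rfl
  · exact iterate_verschiebung_coeff_eq_zero z hlt
  · simpa only [zero_add, hz] using iterate_verschiebung_coeff z i 0

theorem natCast_pow_mem_ker_truncate {c : ℕ} (hc : (c : R) = 0) (m : ℕ) :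
    (c : WittVector p R) ^ m ∈ RingHom.ker (truncate m) := by
  induction m with
  | zero => exact (mem_ker_truncate _ _).2 fun i hi => absurd hi (Nat.not_lt_zero i)
  | succ m ih => rw [pow_succ]; exact mul_natCast_mem_ker_truncate_succ hc ih

end WittVector

theorem TruncatedWittVector.natCast_pow_eq_zero {p : ℕ} [Fact p.Prime] {R : Type*} [CommRing R]
    {c : ℕ} (hc : (c : R) = 0) (n : ℕ) : (c : TruncatedWittVector p n R) ^ n = 0 := by
  simpa only [RingHom.mem_ker, map_pow, map_natCast] using
    WittVector.natCast_pow_mem_ker_truncate (p := p) hc n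

theorem p_nilpotent_truncatedWittVector (p : ℕ) [Fact p.Prime] (R : Type*) [CommRing R]
    (h : ∃ k : ℕ, (p : R) ^ k = 0) (n : ℕ) :
    ∃ k : ℕ, (p : TruncatedWittVector p (n + 1) R) ^ k = 0 := by
  obtain ⟨k, hk⟩ := h
  refine ⟨k * (n + 1), ?_⟩
  rw [pow_mul, ← Nat.cast_pow]
  exact TruncatedWittVector.natCast_pow_eq_zero (by rwa [Nat.cast_pow]) (n + 1)
end

section
/- For any commutative ring R in which p is nilpotent and any n, m ≥ 0, the truncation map W_{n+m}(R) → W_n(R) of p-typical Witt vectors is surjective with nilpotent kernel. -/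
/-! Let `J_j = V^j W(R)`, the kernel of `W(R) → W_j(R)`. The product formula
`V^j x * V^j y = p^j V^j (x y)` gives `J_j^2 ⊆ p^j J_j`, hence `J_j^(k+1) ⊆ p^(jk) J_j`.
If `p^k = 0` in `R` and `j ≥ 1`, the `j`-th coefficient of `p^(jk) V^j a` is `p^(jk) a_0 = 0`,
so `J_j^(k+1) ⊆ J_(j+1)`. Iterating, `J_(n+1)^((k+1)^m) ⊆ J_(n+m+1)`, and the kernel of the
truncation `W_(n+m+1)(R) → W_(n+1)(R)` is the image of `J_(n+1)`. -/

open Function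

theorem Ideal.pow_succ_le_pow_mul_of_mul_self_le {A : Type*} [CommSemiring A] {I K : Ideal A}
    (h : I * I ≤ K * I) (s : ℕ) : I ^ (s + 1) ≤ K ^ s * I := by
  induction s with
  | zero => simp
  | succ s ih =>
    calc I ^ (s + 1 + 1) = I ^ (s + 1) * I := pow_succ _ _
      _ ≤ K ^ s * I * I := Ideal.mul_mono_left ih
      _ ≤ K ^ s * (K * I) := by rw [mul_assoc]; exact Ideal.mul_mono_right h
      _ = K ^ (s + 1) * I := by rw [← mul_assoc, pow_succ]

namespace WittVector

variable {p : ℕ} [Fact p.Prime] {R : Type*} [CommRing R]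

local notation "𝕎" => WittVector p

theorem iterate_frobenius_natCast_pow (n k : ℕ) :
    frobenius^[n] ((p : 𝕎 R) ^ k) = (p : 𝕎 R) ^ k := by
  rw [← RingHom.coe_pow, map_pow, map_natCast]

theorem iterate_frobenius_iterate_verschiebung (x : 𝕎 R) (n : ℕ) :
    frobenius^[n] (verschiebung^[n] x) = x * (p : 𝕎 R) ^ n := by
  induction n generalizing x with
  | zero => simp
  | succ n ih =>
    rw [iterate_succ_apply (f := verschiebung), iterate_succ_apply' (f := frobenius), ih,
      map_mul, frobenius_verschiebung, map_pow, map_natCast, pow_succ', mul_assoc]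

theorem iterate_verschiebung_mul_iterate_verschiebung (x y : 𝕎 R) (n : ℕ) :
    verschiebung^[n] x * verschiebung^[n] y = (p : 𝕎 R) ^ n * verschiebung^[n] (x * y) := by
  rw [iterate_verschiebung_mul_left, iterate_frobenius_iterate_verschiebung, mul_comm (_ ^ n),
    iterate_verschiebung_mul_left, iterate_frobenius_natCast_pow, mul_assoc]

theorem mem_ker_truncate_iff_exists_iterate_verschiebung (n : ℕ) (x : 𝕎 R) :
    x ∈ RingHom.ker (truncate (p := p) n) ↔ ∃ a, verschiebung^[n] a = x := by
  rw [mem_ker_truncate]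
  refine ⟨fun h => ⟨x.shift n, (eq_iterate_verschiebung h).symm⟩, ?_⟩
  rintro ⟨a, rfl⟩ i hi
  exact iterate_verschiebung_coeff_eq_zero a hi

theorem ker_truncate_mul_self_le (n : ℕ) :
    RingHom.ker (truncate (p := p) (R := R) n) * RingHom.ker (truncate n) ≤
      Ideal.span {(p : 𝕎 R) ^ n} * RingHom.ker (truncate n) := by
  rw [Ideal.mul_le]
  intro x hx y hy
  obtain ⟨a, rfl⟩ := (mem_ker_truncate_iff_exists_iterate_verschiebung n x).1 hx
  obtain ⟨b, rfl⟩ := (mem_ker_truncate_iff_exists_iterate_verschiebung n y).1 hy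
  rw [iterate_verschiebung_mul_iterate_verschiebung]
  exact Ideal.mul_mem_mul (Ideal.mem_span_singleton_self _)
    ((mem_ker_truncate_iff_exists_iterate_verschiebung n _).2 ⟨_, rfl⟩)

theorem span_natCast_pow_mul_ker_truncate_le {k : ℕ} (hk : (p : R) ^ k = 0) (n : ℕ) :
    Ideal.span {(p : 𝕎 R) ^ k} * RingHom.ker (truncate (p := p) (R := R) n) ≤
      RingHom.ker (truncate (n + 1)) := by
  rw [Ideal.span_singleton_mul_le_iff]
  intro x hx
  obtain ⟨a, rfl⟩ := (mem_ker_truncate_iff_exists_iterate_verschiebung n x).1 hx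
  rw [mul_comm, iterate_verschiebung_mul_left, iterate_frobenius_natCast_pow, mem_ker_truncate]
  intro i hi
  rcases Nat.lt_succ_iff_lt_or_eq.1 hi with hi | rfl
  · exact iterate_verschiebung_coeff_eq_zero _ hi
  · simpa [← constantCoeff_apply, hk] using iterate_verschiebung_coeff (a * (p : 𝕎 R) ^ k) i 0

theorem ker_truncate_pow_le_ker_truncate_succ {k : ℕ} (hk : (p : R) ^ k = 0) {n : ℕ}
    (hn : n ≠ 0) :
    RingHom.ker (truncate (p := p) (R := R) n) ^ (k + 1) ≤ RingHom.ker (truncate (n + 1)) :=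
  calc _ ≤ Ideal.span {(p : 𝕎 R) ^ n} ^ k * RingHom.ker (truncate n) :=
        Ideal.pow_succ_le_pow_mul_of_mul_self_le (ker_truncate_mul_self_le n) k
    _ = Ideal.span {(p : 𝕎 R) ^ (n * k)} * RingHom.ker (truncate n) := by
        rw [Ideal.span_singleton_pow, pow_mul]
    _ ≤ _ := span_natCast_pow_mul_ker_truncate_le
        (pow_eq_zero_of_le (Nat.le_mul_of_pos_left k (Nat.pos_of_ne_zero hn)) hk) n

theorem ker_truncate_pow_le_ker_truncate_add {k : ℕ} (hk : (p : R) ^ k = 0) {n : ℕ}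
    (hn : n ≠ 0) (m : ℕ) :
    RingHom.ker (truncate (p := p) (R := R) n) ^ ((k + 1) ^ m) ≤
      RingHom.ker (truncate (n + m)) := by
  induction m with
  | zero => simp
  | succ m ih =>
    calc _ = (RingHom.ker (truncate n) ^ ((k + 1) ^ m)) ^ (k + 1) := by rw [pow_succ, pow_mul]
      _ ≤ RingHom.ker (truncate (n + m)) ^ (k + 1) := Ideal.pow_right_mono ih _
      _ ≤ _ := ker_truncate_pow_le_ker_truncate_succ hk (by omega)

end WittVector

theorem TruncatedWittVector.ker_truncate {p : ℕ} [Fact p.Prime] {R : Type*} [CommRing R]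
    {n m : ℕ} (hm : n ≤ m) :
    RingHom.ker (truncate (p := p) (R := R) hm) =
      (RingHom.ker (WittVector.truncate n)).map (WittVector.truncate m) := by
  rw [← truncate_comp_wittVector_truncate hm, ← RingHom.comap_ker,
    Ideal.map_comap_of_surjective _ (WittVector.truncate_surjective p m R)]

theorem truncation_surjective_nilpotent_kernel (p : ℕ) [Fact p.Prime] (R : Type*) [CommRing R]
    (h : ∃ k : ℕ, (p : R) ^ k = 0) (n m : ℕ) :
    Function.Surjective
        (TruncatedWittVector.truncate (p := p) (R := R)
          (show n + 1 ≤ n + m + 1 by omega)) ∧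
      ∃ N : ℕ,
        (RingHom.ker (TruncatedWittVector.truncate (p := p) (R := R)
          (show n + 1 ≤ n + m + 1 by omega))) ^ N = ⊥ := by
  refine ⟨TruncatedWittVector.truncate_surjective _, ?_⟩
  obtain ⟨k, hk⟩ := h
  refine ⟨(k + 1) ^ m, ?_⟩
  rw [TruncatedWittVector.ker_truncate, ← Ideal.map_pow, Ideal.map_eq_bot_iff_le_ker,
    add_right_comm]
  exact WittVector.ker_truncate_pow_le_ker_truncate_add hk n.succ_ne_zero m
end

section
/- For any commutative ring R and n ≥ 1, the diagram W_{n+1}(R) → W_n(W_1(R)) ⇉ W_{n−1}(W_1(R)) is an equaliser: the comonad comultiplication map Δ: W_{n+1}(R) → W_n(W_1(R)) is injective, and its image is exactly the equaliser of the truncation map τ: W_n(W_1(R)) → W_{n−1}(W_1(R)) and the map Δ ∘ W_n(τ): W_n(W_1(R)) → W_{n−1}(W_1(R)). -/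
/-!
`Δ` has the explicit left inverse `z ↦ ((z₀)₀, (z₁)₀, …, (z_n)₀, (z_n)₁)`. The equaliser
condition says exactly `(z_i)₁ = (z_{i+1})₀`, which is what makes this left inverse also a
right inverse on the equaliser.
-/

/-- The comonad comultiplication `Δ : W_{n+1}(R) → W_n(W_1(R))` in Buium–Joyal coordinates:
`(x₀, …, x_{n+1}) ↦ ((x₀,x₁), (x₁,x₂), …, (x_n,x_{n+1}))`. -/
def wittComult (R : Type*) (n : ℕ) : (Fin (n + 2) → R) → Fin (n + 1) → Fin 2 → R :=
  fun x i j => x ⟨(i : ℕ) + (j : ℕ), by have := i.2; have := j.2; omega⟩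

/-- The comultiplication `Δ : W_n(R) → W_{n-1}(W_1(R))` in Buium–Joyal coordinates. -/
def wittComult' (R : Type*) (n : ℕ) : (Fin (n + 1) → R) → Fin n → Fin 2 → R :=
  fun x i j => x ⟨(i : ℕ) + (j : ℕ), by have := i.2; have := j.2; omega⟩

/-- The truncation `τ : W_n(W_1(R)) → W_{n-1}(W_1(R))` in Buium–Joyal coordinates. -/
def wittTrunc (R : Type*) (n : ℕ) : (Fin (n + 1) → Fin 2 → R) → Fin n → Fin 2 → R :=
  fun z i => z ⟨(i : ℕ), by have := i.2; omega⟩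

/-- The map `W_n(τ) : W_n(W_1(R)) → W_n(W_0(R)) = W_n(R)` in Buium–Joyal coordinates. -/
def wittMapTrunc (R : Type*) (n : ℕ) : (Fin (n + 1) → Fin 2 → R) → Fin (n + 1) → R :=
  fun z i => z i 0

def wittComultLeftInv (R : Type*) (n : ℕ) (z : Fin (n + 1) → Fin 2 → R) : Fin (n + 2) → R :=
  Fin.snoc (wittMapTrunc R n z) (z (Fin.last n) 1)

theorem wittComultLeftInv_leftInverse (R : Type*) (n : ℕ) :
    Function.LeftInverse (wittComultLeftInv R n) (wittComult R n) := by
  intro x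
  funext k
  induction k using Fin.lastCases with
  | last => exact Fin.snoc_last (α := fun _ => R) _ _
  | cast i => exact Fin.snoc_castSucc (α := fun _ => R) _ _ _

theorem wittTrunc_wittComult_eq {R : Type*} {n : ℕ} (x : Fin (n + 2) → R) :
    wittTrunc R n (wittComult R n x) = wittComult' R n (wittMapTrunc R n (wittComult R n x)) :=
  rfl

theorem wittComult_wittComultLeftInv_of_eq {R : Type*} {n : ℕ} {z : Fin (n + 1) → Fin 2 → R}
    (hz : wittTrunc R n z = wittComult' R n (wittMapTrunc R n z)) :
    wittComult R n (wittComultLeftInv R n z) = z := by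
  funext i j
  match j with
  | 0 => exact Fin.snoc_castSucc (α := fun _ => R) _ _ i
  | 1 =>
    induction i using Fin.lastCases with
    | last => exact Fin.snoc_last (α := fun _ => R) _ _
    | cast i =>
      have hi : z i.castSucc 1 = z i.succ 0 := congrFun (congrFun hz i) 1
      exact (Fin.snoc_castSucc (α := fun _ => R) _ _ i.succ).trans hi.symm

theorem wittComult_equalizer_general (R : Type*) (n : ℕ) :
    Function.Injective (wittComult R n) ∧
      ∀ z : Fin (n + 1) → Fin 2 → R,
        (wittTrunc R n z = wittComult' R n (wittMapTrunc R n z) ↔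
          ∃ x : Fin (n + 2) → R, wittComult R n x = z) :=
  ⟨(wittComultLeftInv_leftInverse R n).injective, fun z =>
    ⟨fun hz => ⟨_, wittComult_wittComultLeftInv_of_eq hz⟩,
      by rintro ⟨x, rfl⟩; exact wittTrunc_wittComult_eq x⟩⟩

/-- Lemma 2.5.2: for `n ≥ 1`, the diagram
`W_{n+1}(R) → W_n(W_1(R)) ⇉ W_{n-1}(W_1(R))` is an equaliser, where the first map is `Δ`
and the parallel pair is `τ` and `Δ ∘ W_n(τ)`. -/
theorem wittComult_equalizer (R : Type*) [CommRing R] (n : ℕ) (hn : 1 ≤ n) :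
    Function.Injective (wittComult R n) ∧
      ∀ z : Fin (n + 1) → Fin 2 → R,
        (wittTrunc R n z = wittComult' R n (wittMapTrunc R n z) ↔
          ∃ x : Fin (n + 2) → R, wittComult R n x = z) :=
  wittComult_equalizer_general R n
end

section
/- Let (R_i)_{i∈I} be a cofiltered system of commutative rings which is p-torsion free as a pro-ring (for each i there is j ≥ i with R_j[p] → R_i[p] the zero map). Then for each i there is j ≥ i and a unique ring homomorphism s: \overline{W}_1(R_j) → W_1(R_i) splitting the diagram: s composed with the ghost surjection W_1(R_j) → \overline{W}_1(R_j) equals the structure map W_1(R_j) → W_1(R_i), and the projection composed with s equals the structure map \overline{W}_1(R_j) → \overline{W}_1(R_i). Consequently the pro-rings (W_1(R_i))_i and (\overline{W}_1(R_i))_i are pro-isomorphic. -/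
/-!
The ghost map `W_1(R) → R × R` is surjective onto `\overline{W}_1(R)`, and its kernel consists of
the Witt vectors `(0, x)` with `p x = 0`. If the transition map `R_j → R_i` kills `R_j[p]`, then
`W_1(R_j) → W_1(R_i)` kills this kernel, so it descends uniquely along the ghost surjection; the
descended map is compatible with the ghost maps because they are computed coordinatewise.
-/

open WittVector

/-- The functorial map `W_n(f) : W_n(R) → W_n(S)` on truncated Witt vectors induced by a
ring homomorphism `f : R → S`. -/
noncomputable def twvMap (p : ℕ) [Fact p.Prime] (n : ℕ) {R S : Type*} [CommRing R] [CommRing S]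
    (f : R →+* S) : TruncatedWittVector p n R →+* TruncatedWittVector p n S :=
  RingHom.liftOfRightInverse (WittVector.truncate n) TruncatedWittVector.out
    TruncatedWittVector.truncateFun_out
    ⟨(WittVector.truncate n).comp (WittVector.map f), by
      intro x hx
      rw [WittVector.mem_ker_truncate] at hx
      rw [RingHom.mem_ker, RingHom.comp_apply, ← RingHom.mem_ker, WittVector.mem_ker_truncate]
      intro i hi
      rw [WittVector.map_coeff, hx i hi, map_zero]⟩

section TwvMap

variable (p : ℕ) [Fact p.Prime] (n : ℕ) {R S : Type*} [CommRing R] [CommRing S] (f : R →+* S)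

theorem twvMap_truncate (x : WittVector p R) :
    twvMap p n f (truncate n x) = truncate n (WittVector.map f x) :=
  RingHom.liftOfRightInverse_comp_apply _ _ _ _ x

theorem twvMap_coeff (x : TruncatedWittVector p n R) (k : Fin n) :
    (twvMap p n f x).coeff k = f (x.coeff k) := by
  obtain ⟨y, rfl⟩ := WittVector.truncate_surjective p n R x
  rw [twvMap_truncate, coeff_truncate, coeff_truncate, map_coeff]

theorem twvMap_eq_zero_iff (x : TruncatedWittVector p n R) :
    twvMap p n f x = 0 ↔ ∀ k, f (x.coeff k) = 0 := by
  simp only [TruncatedWittVector.ext_iff, twvMap_coeff, TruncatedWittVector.coeff_zero]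

end TwvMap

theorem ker_ghost_le_ker_twvMap {p : ℕ} [Fact p.Prime] {A B : Type*} [CommRing A] [CommRing B]
    (gh : TruncatedWittVector p 2 A →+* A × A)
    (hgh : ∀ x, gh x = (x.coeff 0, x.coeff 0 ^ p + p * x.coeff 1))
    (f : A →+* B) (hf : ∀ a : A, (p : A) * a = 0 → f a = 0) :
    RingHom.ker gh ≤ RingHom.ker (twvMap p 2 f) := by
  intro x hx
  rw [RingHom.mem_ker, hgh, Prod.mk_eq_zero] at hx
  obtain ⟨h0, h1⟩ := hx
  rw [h0, zero_pow (Fact.out : p.Prime).ne_zero, zero_add] at h1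
  rw [RingHom.mem_ker, twvMap_eq_zero_iff]
  intro k
  fin_cases k
  · exact h0 ▸ map_zero f
  · exact hf _ h1

theorem wbar_splits_pro_general (p : ℕ) [Fact p.Prime] {I : Type*} [Preorder I]
    (R : I → Type) [inst : ∀ i, CommRing (R i)]
    (t : ∀ i j, i ≤ j → (R j →+* R i))
    (hptf : ∀ i, ∃ j, ∃ _ : i ≤ j, ∀ x : R j, (p : R j) * x = 0 → t i j ‹i ≤ j› x = 0)
    (gh : ∀ (A : Type) [CommRing A], TruncatedWittVector p 2 A →+* A × A)
    (hgh : ∀ (A : Type) (_ : CommRing A) (x : TruncatedWittVector p 2 A),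
      gh A x = (x.coeff 0, x.coeff 0 ^ p + p * x.coeff 1)) :
    ∀ i, ∃ j, ∃ h : i ≤ j,
      ∃! s : (gh (R j)).range →+* TruncatedWittVector p 2 (R i),
        s.comp (gh (R j)).rangeRestrict = twvMap p 2 (t i j h) ∧
          ∀ y : (gh (R j)).range,
            gh (R i) (s y) = (t i j h (y : R j × R j).1, t i j h (y : R j × R j).2) := by
  intro i
  obtain ⟨j, hij, hj⟩ := hptf i
  refine ⟨j, hij, ?_⟩
  have hsurj := (gh (R j)).rangeRestrict_surjective
  have hker : RingHom.ker (gh (R j)).rangeRestrict ≤ RingHom.ker (twvMap p 2 (t i j hij)) := by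
    rw [RingHom.ker_rangeRestrict]
    exact ker_ghost_le_ker_twvMap _ (hgh _ _) _ hj
  set s := (gh (R j)).rangeRestrict.liftOfSurjective hsurj ⟨_, hker⟩
  have hs : s.comp (gh (R j)).rangeRestrict = twvMap p 2 (t i j hij) :=
    RingHom.liftOfSurjective_comp _ hsurj _
  refine ⟨s, ⟨hs, ?_⟩, fun s' hs' => RingHom.eq_liftOfSurjective _ hsurj _ hker s' hs'.1⟩
  intro y
  obtain ⟨x, rfl⟩ := hsurj y
  rw [← RingHom.comp_apply s, hs, RingHom.coe_rangeRestrict, hgh, hgh]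
  simp [twvMap_coeff]

/-- For a p-torsion free pro-ring (R_i), the ghost quotient Wbar_1(R_j) -> W_1(R_i)
splits compatibly: for each i there are j >= i and a unique ring homomorphism
s : Wbar_1(R_j) -> W_1(R_i) such that s composed with the ghost surjection
W_1(R_j) -> Wbar_1(R_j) is the structure map W_1(R_j) -> W_1(R_i), and the ghost map
composed with s is the structure map Wbar_1(R_j) -> Wbar_1(R_i). -/
theorem wbar_splits_pro (p : ℕ) [Fact p.Prime] {I : Type*} [Preorder I]
    [IsDirected I (· ≤ ·)]
    (R : I → Type) [inst : ∀ i, CommRing (R i)]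
    (t : ∀ i j, i ≤ j → (R j →+* R i))
    (ht : ∀ i j k (hij : i ≤ j) (hjk : j ≤ k), (t i j hij).comp (t j k hjk) = t i k (hij.trans hjk))
    (hptf : ∀ i, ∃ j, ∃ _ : i ≤ j, ∀ x : R j, (p : R j) * x = 0 → t i j ‹i ≤ j› x = 0)
    (gh : ∀ (A : Type) [CommRing A], TruncatedWittVector p 2 A →+* A × A)
    (hgh : ∀ (A : Type) (_ : CommRing A) (x : TruncatedWittVector p 2 A),
      gh A x = (x.coeff 0, x.coeff 0 ^ p + p * x.coeff 1)) :
    ∀ i, ∃ j, ∃ h : i ≤ j,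
      ∃! s : (gh (R j)).range →+* TruncatedWittVector p 2 (R i),
        s.comp (gh (R j)).rangeRestrict = twvMap p 2 (t i j h) ∧
          ∀ y : (gh (R j)).range,
            gh (R i) (s y) = (t i j h (y : R j × R j).1, t i j h (y : R j × R j).2) :=
  wbar_splits_pro_general p R (inst := inst) t hptf gh hgh
end
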